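/- arXiv:1009.4905 — 5 statements merged into one kernel-verified Lean document; each statement's English description precedes it below -/
import Mathlib

section
/- The function Q(x) = ((m+1)/(2*cosh^2(((m-1)/2)*x)))^(1/(m-1)) satisfies the ODE Q'' - Q + Q^m = 0 on ℝ, is positive, and tends to 0 at ±∞. -/
open Filter

theorem stmt_0 (m : ℕ) (hm : 2 ≤ m) (Q : ℝ → ℝ)
    (hQ : ∀ x : ℝ, Q x =
      (((m : ℝ) + 1) / (2 * Real.cosh ((((m : ℝ) - 1) / 2) * x) ^ 2)) ^ ((1 : ℝ) / ((m : ℝ) - 1))) :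
    (∀ x : ℝ, deriv (deriv Q) x - Q x + Q x ^ m = 0) ∧
    (∀ x : ℝ, 0 < Q x) ∧
    Tendsto Q atTop (nhds 0) ∧ Tendsto Q atBot (nhds 0) := by
  have hm2 : (2:ℝ) ≤ (m:ℝ) := by exact_mod_cast hm
  have hm0 : (0:ℝ) < (m:ℝ) - 1 := by linarith
  have hm0' : ((m:ℝ) - 1) ≠ 0 := ne_of_gt hm0
  set a : ℝ := ((m:ℝ)-1)/2 with ha
  set p : ℝ := 1/((m:ℝ)-1) with hp
  set e : ℝ := -(2*p) with he
  have hp0 : 0 < p := by positivity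
  have ha0 : 0 < a := by positivity
  set c' : ℝ := ((m:ℝ)+1)/2 with hc'
  have hc0 : 0 < c' := by positivity
  set K : ℝ := c' ^ p with hK
  have hK0 : 0 < K := Real.rpow_pos_of_pos hc0 p
  have hz : ∀ x : ℝ, 0 < Real.cosh (a*x) := fun x => Real.cosh_pos _
  -- rewrite Q
  have hQF : Q = fun x => K * Real.cosh (a*x) ^ e := by
    funext x
    rw [hQ x]
    set z := Real.cosh (a*x) with hzdef
    have hz0 : 0 < z := Real.cosh_pos _
    have hbase : ((m:ℝ) + 1) / (2 * z ^ 2) = c' * (z^2)⁻¹ := by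
      field_simp [hc']
      rw [hc']; ring
    have h1 : ((z^2)⁻¹ : ℝ) = z ^ (-2 : ℝ) := by
      rw [← Real.rpow_natCast z 2, ← Real.rpow_neg hz0.le]; norm_num
    have h2 : (z ^ (-2:ℝ)) ^ p = z ^ e := by
      rw [← Real.rpow_mul hz0.le]
      congr 1
      rw [he]; ring
    rw [hbase, Real.mul_rpow hc0.le (by positivity), h1, h2]
  -- first derivative
  have hlin : ∀ x : ℝ, HasDerivAt (fun x : ℝ => a*x) a x := by
    intro x; simpa using (hasDerivAt_id x).const_mul a
  have hcosh : ∀ x : ℝ, HasDerivAt (fun x => Real.cosh (a*x)) (Real.sinh (a*x) * a) x :=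
    fun x => (Real.hasDerivAt_cosh (a*x)).comp x (hlin x)
  have hsinh : ∀ x : ℝ, HasDerivAt (fun x => Real.sinh (a*x)) (Real.cosh (a*x) * a) x :=
    fun x => (Real.hasDerivAt_sinh (a*x)).comp x (hlin x)
  have hD1 : ∀ x : ℝ, HasDerivAt Q
      (K * (Real.sinh (a*x) * a * e * Real.cosh (a*x) ^ (e-1))) x := by
    intro x
    rw [hQF]
    exact ((hcosh x).rpow_const (p := e) (Or.inl (hz x).ne')).const_mul K
  have hdQ : deriv Q = fun x => (K*e*a) * (Real.cosh (a*x) ^ (e-1) * Real.sinh (a*x)) := by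
    funext x
    rw [(hD1 x).deriv]; ring
  have hD2 : ∀ x : ℝ, HasDerivAt (deriv Q)
      ((K*e*a) * (Real.sinh (a*x) * a * (e-1) * Real.cosh (a*x) ^ (e-1-1) * Real.sinh (a*x)
        + Real.cosh (a*x) ^ (e-1) * (Real.cosh (a*x) * a))) x := by
    intro x
    rw [hdQ]
    exact (((hcosh x).rpow_const (p := e-1) (Or.inl (hz x).ne')).mul (hsinh x)).const_mul (K*e*a)
  refine ⟨?_, ?_, ?_, ?_⟩
  · intro x
    rw [(hD2 x).deriv]
    set y := Real.cosh (a*x) with hydef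
    set s := Real.sinh (a*x) with hsdef
    have hy0 : 0 < y := hz x
    set A := y ^ e with hA
    set B := y ^ (e-1) with hB
    set C := y ^ (e-1-1) with hC
    have hQx : Q x = K * A := by rw [hQF]
    have hBA : B * y = A := by
      rw [hB, hA, ← Real.rpow_add_one hy0.ne' (e-1)]; ring_nf
    have hCB : C * y = B := by
      rw [hC, hB, ← Real.rpow_add_one hy0.ne' (e-1-1)]; ring_nf
    have hss : s * s = y * y - 1 := by
      have := Real.cosh_sq_sub_sinh_sq (a*x)
      rw [← hydef, ← hsdef] at this
      nlinarith [this]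
    have hKm : K ^ m = K * c' := by
      rw [← Real.rpow_natCast K m, hK, ← Real.rpow_mul hc0.le]
      have hpm : p * (m:ℝ) = p + 1 := by
        rw [hp]; field_simp; ring
      rw [hpm, Real.rpow_add_one hc0.ne' p]
    have hAm : A ^ m = C := by
      rw [← Real.rpow_natCast A m, hA, ← Real.rpow_mul hy0.le]
      congr 1
      rw [he, hp]; field_simp; ring
    have hQm : Q x ^ m = (c'*K) * C := by
      rw [hQx, mul_pow, hKm, hAm]; ring
    rw [hQm, hQx]
    have hea : e * a = -1 := by rw [he, hp, ha]; field_simp; try ring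
    have hc2 : a * (e-1) = -c' := by rw [he, hp, ha, hc']; field_simp; ring
    have hca : c' = a + 1 := by rw [hc', ha]; ring
    linear_combination (K*e*a*a*(e-1)*C) * hss + (K*e*a*a*(e-1)*y) * hCB
      + (K*e*a*a*(e-1) + K*e*a*a) * hBA
      + (K*a*(e-1)*A + K*a*A - K*a*(e-1)*C) * hea
      + (-(K*A) + K*C) * hc2 + (K*A) * hca
  · intro x
    rw [hQF]
    exact mul_pos hK0 (Real.rpow_pos_of_pos (hz x) e)
  · rw [hQF]
    have hbd : ∀ y : ℝ, Real.exp y / 2 ≤ Real.cosh y := by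
      intro y
      rw [Real.cosh_eq]
      have := Real.exp_pos (-y)
      linarith
    have hct : Tendsto Real.cosh atTop atTop :=
      tendsto_atTop_mono hbd (Real.tendsto_exp_atTop.atTop_div_const two_pos)
    have h1 : Tendsto (fun x : ℝ => Real.cosh (a*x)) atTop atTop :=
      hct.comp (tendsto_id.const_mul_atTop ha0)
    have h2 : Tendsto (fun x : ℝ => Real.cosh (a*x) ^ e) atTop (nhds 0) := by
      have := (tendsto_rpow_neg_atTop (by positivity : (0:ℝ) < 2*p)).comp h1
      simpa [he, Function.comp_def] using this
    simpa using h2.const_mul K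
  · rw [hQF]
    have hbd : ∀ y : ℝ, Real.exp (-y) / 2 ≤ Real.cosh y := by
      intro y
      rw [Real.cosh_eq]
      have := Real.exp_pos y
      linarith
    have hct : Tendsto Real.cosh atBot atTop := by
      refine tendsto_atTop_mono hbd ?_
      exact (Real.tendsto_exp_atTop.comp tendsto_neg_atBot_atTop).atTop_div_const two_pos
    have h1 : Tendsto (fun x : ℝ => Real.cosh (a*x)) atBot atTop :=
      hct.comp (tendsto_id.const_mul_atBot ha0)
    have h2 : Tendsto (fun x : ℝ => Real.cosh (a*x) ^ e) atBot (nhds 0) := by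
      have := (tendsto_rpow_neg_atTop (by positivity : (0:ℝ) < 2*p)).comp h1
      simpa [he, Function.comp_def] using this
    simpa using h2.const_mul K
end

section
/- For m = 3 and L₀ w = -w'' + w - 3Q²w with Q(x) = √2/cosh(x), one has L₀(Q²) = -3Q² and L₀(Q' · ln Q) = -2Q' + (5/2)Q²Q'. -/
theorem stmt_10 (Q : ℝ → ℝ) (hQ : ∀ x : ℝ, Q x = Real.sqrt 2 / Real.cosh x)
    (L₀ : (ℝ → ℝ) → ℝ → ℝ)
    (hL₀ : ∀ (w : ℝ → ℝ) (x : ℝ), L₀ w x = -deriv (deriv w) x + w x - 3 * (Q x) ^ 2 * w x) :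
    (∀ x : ℝ, L₀ (fun y => (Q y) ^ 2) x = -3 * (Q x) ^ 2) ∧
    (∀ x : ℝ, L₀ (fun y => deriv Q y * Real.log (Q y)) x
      = -2 * deriv Q x + (5 / 2) * (Q x) ^ 2 * deriv Q x) := by
  have hc : ∀ y : ℝ, Real.cosh y ≠ 0 := fun y => (Real.cosh_pos y).ne'
  have h2 : Real.sqrt 2 ≠ 0 := by positivity
  have hr : Real.sqrt 2 ^ 2 = 2 := Real.sq_sqrt (by norm_num)
  have hs : ∀ y : ℝ, Real.sinh y ^ 2 = Real.cosh y ^ 2 - 1 := Real.sinh_sq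
  -- derivative of Q
  have hg : ∀ y : ℝ, HasDerivAt (fun z => Real.sqrt 2 / Real.cosh z)
      (-Real.sqrt 2 * Real.sinh y / Real.cosh y ^ 2) y := by
    intro y
    have := (hasDerivAt_const y (Real.sqrt 2)).div (Real.hasDerivAt_cosh y) (hc y)
    refine this.congr_deriv (Eq.symm ?_)
    ring
  -- Part 1 : first derivative of Q^2
  have h1 : ∀ y : ℝ, HasDerivAt (fun z => (Real.sqrt 2 / Real.cosh z) ^ 2)
      (-4 * Real.sinh y / Real.cosh y ^ 3) y := by
    intro y
    have := (hg y).pow 2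
    refine this.congr_deriv (Eq.symm ?_)
    simp only [Pi.pow_apply, Pi.sub_apply, Pi.mul_apply, Nat.cast_ofNat, Nat.reduceSub, pow_one]
    field_simp
    linear_combination (2 * Real.sinh y) * hr
  have h2' : ∀ y : ℝ, HasDerivAt (fun z => -4 * Real.sinh z / Real.cosh z ^ 3)
      ((8 * Real.cosh y ^ 2 - 12) / Real.cosh y ^ 4) y := by
    intro y
    have := ((Real.hasDerivAt_sinh y).const_mul (-4)).div ((Real.hasDerivAt_cosh y).pow 3)
      (pow_ne_zero 3 (hc y))
    refine this.congr_deriv (Eq.symm ?_)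
    simp only [Pi.pow_apply, Pi.sub_apply, Pi.mul_apply, Nat.cast_ofNat, Nat.reduceSub, pow_one]
    field_simp
    linear_combination (-12) * hs y
  -- Part 2 pieces
  have hg' : ∀ y : ℝ, HasDerivAt (fun z => -Real.sqrt 2 * Real.sinh z / Real.cosh z ^ 2)
      ((Real.sqrt 2 * Real.cosh y ^ 2 - 2 * Real.sqrt 2) / Real.cosh y ^ 3) y := by
    intro y
    have := ((Real.hasDerivAt_sinh y).const_mul (-Real.sqrt 2)).div
      ((Real.hasDerivAt_cosh y).pow 2) (pow_ne_zero 2 (hc y))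
    refine this.congr_deriv (Eq.symm ?_)
    simp only [Pi.pow_apply, Pi.sub_apply, Pi.mul_apply, Nat.cast_ofNat, Nat.reduceSub, pow_one]
    field_simp
    linear_combination (-2) * hs y
  have hL : ∀ y : ℝ, HasDerivAt (fun z => Real.log (Real.sqrt 2 / Real.cosh z))
      (-(Real.sinh y / Real.cosh y)) y := by
    intro y
    have := (hg y).log (div_ne_zero h2 (hc y))
    refine this.congr_deriv (Eq.symm ?_)
    field_simp
  have hw : ∀ y : ℝ, HasDerivAt
      (fun z => -Real.sqrt 2 * Real.sinh z / Real.cosh z ^ 2 * Real.log (Real.sqrt 2 / Real.cosh z))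
      (((Real.sqrt 2 * Real.cosh y ^ 2 - 2 * Real.sqrt 2) / Real.cosh y ^ 3)
          * Real.log (Real.sqrt 2 / Real.cosh y)
        + Real.sqrt 2 * Real.sinh y ^ 2 / Real.cosh y ^ 3) y := by
    intro y
    have := (hg' y).mul (hL y)
    refine this.congr_deriv (Eq.symm ?_)
    field_simp
  have hw2 : ∀ x : ℝ, HasDerivAt
      (fun z => ((Real.sqrt 2 * Real.cosh z ^ 2 - 2 * Real.sqrt 2) / Real.cosh z ^ 3)
          * Real.log (Real.sqrt 2 / Real.cosh z)
        + Real.sqrt 2 * Real.sinh z ^ 2 / Real.cosh z ^ 3)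
      (((6 * Real.sqrt 2 * Real.sinh x - Real.sqrt 2 * Real.sinh x * Real.cosh x ^ 2)
          / Real.cosh x ^ 4) * Real.log (Real.sqrt 2 / Real.cosh x)
        + (5 * Real.sqrt 2 * Real.sinh x - 2 * Real.sqrt 2 * Real.sinh x * Real.cosh x ^ 2)
          / Real.cosh x ^ 4) x := by
    intro x
    have hA : HasDerivAt (fun z => (Real.sqrt 2 * Real.cosh z ^ 2 - 2 * Real.sqrt 2) / Real.cosh z ^ 3)
        ((6 * Real.sqrt 2 * Real.sinh x - Real.sqrt 2 * Real.sinh x * Real.cosh x ^ 2)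
          / Real.cosh x ^ 4) x := by
      have := ((((Real.hasDerivAt_cosh x).pow 2).const_mul (Real.sqrt 2)).sub
        (hasDerivAt_const x (2 * Real.sqrt 2))).div ((Real.hasDerivAt_cosh x).pow 3)
        (pow_ne_zero 3 (hc x))
      refine this.congr_deriv (Eq.symm ?_)
      simp only [Pi.pow_apply, Pi.sub_apply, Pi.mul_apply, Nat.cast_ofNat, Nat.reduceSub, pow_one]
      field_simp
      ring
    have hB : HasDerivAt (fun z => Real.sqrt 2 * Real.sinh z ^ 2 / Real.cosh z ^ 3)
        ((3 * Real.sqrt 2 * Real.sinh x - Real.sqrt 2 * Real.sinh x * Real.cosh x ^ 2)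
          / Real.cosh x ^ 4) x := by
      have := (((Real.hasDerivAt_sinh x).pow 2).const_mul (Real.sqrt 2)).div
        ((Real.hasDerivAt_cosh x).pow 3) (pow_ne_zero 3 (hc x))
      refine this.congr_deriv (Eq.symm ?_)
      simp only [Pi.pow_apply, Pi.sub_apply, Pi.mul_apply, Nat.cast_ofNat, Nat.reduceSub, pow_one]
      field_simp
      linear_combination (3 * Real.sinh x) * hs x
    have := (hA.mul (hL x)).add hB
    refine this.congr_deriv (Eq.symm ?_)
    field_simp
    ring
  constructor
  · intro x
    have e : (fun y => (Q y) ^ 2) = (fun z => (Real.sqrt 2 / Real.cosh z) ^ 2) :=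
      funext fun y => by rw [hQ]
    have d1 : deriv (fun z => (Real.sqrt 2 / Real.cosh z) ^ 2)
        = fun y => -4 * Real.sinh y / Real.cosh y ^ 3 := funext fun y => (h1 y).deriv
    rw [hL₀]
    simp only [e, d1, (h2' x).deriv, hQ]
    simp only [div_pow, hr]
    field_simp
    ring
  · intro x
    have hQ' : Q = fun z => Real.sqrt 2 / Real.cosh z := funext hQ
    have edQ : deriv Q = fun y => -Real.sqrt 2 * Real.sinh y / Real.cosh y ^ 2 := by
      rw [hQ']; exact funext fun y => (hg y).deriv
    have e2 : (fun y => deriv Q y * Real.log (Q y))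
        = (fun z => -Real.sqrt 2 * Real.sinh z / Real.cosh z ^ 2
            * Real.log (Real.sqrt 2 / Real.cosh z)) :=
      funext fun y => by rw [hQ]; simp only [edQ]
    have d1 : deriv (fun z => -Real.sqrt 2 * Real.sinh z / Real.cosh z ^ 2
          * Real.log (Real.sqrt 2 / Real.cosh z))
        = fun y => ((Real.sqrt 2 * Real.cosh y ^ 2 - 2 * Real.sqrt 2) / Real.cosh y ^ 3)
            * Real.log (Real.sqrt 2 / Real.cosh y)
          + Real.sqrt 2 * Real.sinh y ^ 2 / Real.cosh y ^ 3 := funext fun y => (hw y).deriv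
    rw [hL₀]
    simp only [e2, d1, (hw2 x).deriv, hQ, edQ]
    simp only [div_pow, hr]
    field_simp
    ring
end

section
/- For m = 3 and c > 0, the function c - Q_c² lies in the kernel of y ↦ (L w)' , i.e. (L(c - Q_c²))' = 0, where Lw = -w'' + cw - 3Q_c²w and Q_c(x) = c^{1/2}·√2/cosh(√c x). -/
theorem stmt_13 (c : ℝ) (hc : 0 < c) (Qc : ℝ → ℝ)
    (hQc : ∀ x : ℝ, Qc x = Real.sqrt (2 * c) / Real.cosh (Real.sqrt c * x))
    (L : (ℝ → ℝ) → ℝ → ℝ)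
    (hL : ∀ (w : ℝ → ℝ) (x : ℝ), L w x = -deriv (deriv w) x + c * w x - 3 * (Qc x) ^ 2 * w x) :
    ∀ x : ℝ, deriv (L (fun y => c - (Qc y) ^ 2)) x = 0 := by
  set u := Real.sqrt c with hu_def
  have hu : u * u = c := Real.mul_self_sqrt hc.le
  have h2c : Real.sqrt (2 * c) ^ 2 = 2 * c := Real.sq_sqrt (by linarith)
  have hcoshpos : ∀ y : ℝ, 0 < Real.cosh (u * y) := fun y => Real.cosh_pos _
  have hcosh : ∀ y : ℝ, Real.cosh (u * y) ≠ 0 := fun y => (hcoshpos y).ne'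
  have hfe : (fun y => c - (Qc y) ^ 2)
      = (fun y => c - 2 * c / (Real.cosh (u * y)) ^ 2) := by
    funext y; rw [hQc, div_pow, h2c]
  have hlin : ∀ y : ℝ, HasDerivAt (fun z : ℝ => u * z) u y := by
    intro y
    simpa using (hasDerivAt_id y).const_mul u
  have hcoshd : ∀ y : ℝ, HasDerivAt (fun z => Real.cosh (u * z)) (Real.sinh (u * y) * u) y :=
    fun y => (Real.hasDerivAt_cosh (u * y)).comp y (hlin y)
  have hsinhd : ∀ y : ℝ, HasDerivAt (fun z => Real.sinh (u * z)) (Real.cosh (u * y) * u) y :=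
    fun y => (Real.hasDerivAt_sinh (u * y)).comp y (hlin y)
  have hf' : ∀ y : ℝ, HasDerivAt (fun z => c - 2 * c / (Real.cosh (u * z)) ^ 2)
      (4 * c * u * Real.sinh (u * y) / (Real.cosh (u * y)) ^ 3) y := by
    intro y
    have h1 := (hcoshd y).fun_pow 2
    have h2 := (hasDerivAt_const y (2 * c)).fun_div h1 (pow_ne_zero 2 (hcosh y))
    have h3 := (hasDerivAt_const y c).fun_sub h2
    refine h3.congr_deriv ?_
    field_simp
    ring
  have hderiv1 : deriv (fun y => c - (Qc y) ^ 2)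
      = fun y => 4 * c * u * Real.sinh (u * y) / (Real.cosh (u * y)) ^ 3 := by
    funext y; rw [hfe]; exact (hf' y).deriv
  have hd2 : ∀ y : ℝ, deriv (deriv (fun z => c - (Qc z) ^ 2)) y
      = (4 * c * u * (Real.cosh (u * y) * u) * (Real.cosh (u * y)) ^ 3
          - 4 * c * u * Real.sinh (u * y) * (3 * (Real.cosh (u * y)) ^ 2 * (Real.sinh (u * y) * u)))
          / ((Real.cosh (u * y)) ^ 3) ^ 2 := by
    intro y
    rw [hderiv1]
    have hn : HasDerivAt (fun z => 4 * c * u * Real.sinh (u * z))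
        (4 * c * u * (Real.cosh (u * y) * u)) y := (hsinhd y).const_mul _
    have hd : HasDerivAt (fun z => (Real.cosh (u * z)) ^ 3)
        (3 * (Real.cosh (u * y)) ^ 2 * (Real.sinh (u * y) * u)) y := by
      have := (hcoshd y).fun_pow 3
      simpa using this
    exact ((hn.fun_div hd (pow_ne_zero 3 (hcosh y))).deriv)
  have hconst : L (fun y => c - (Qc y) ^ 2) = fun _ => c ^ 2 := by
    funext y
    rw [hL, hd2 y, hQc, div_pow, h2c]
    have hid := Real.cosh_sq_sub_sinh_sq (u * y)
    have hC := hcosh y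
    have hs : Real.sinh (u * y) ^ 2 = Real.cosh (u * y) ^ 2 - 1 := by
      have := Real.cosh_sq_sub_sinh_sq (u * y); linarith
    field_simp
    linear_combination (12 * u ^ 2) * hs
      + (8 * Real.cosh (u * y) ^ 2 - 12) * hu
  intro x
  rw [hconst]
  simp
end

section
/- Suppose (C, P) : [-T, ∞) → ℝ² is a C¹ solution of C' = ε·p·C·(C - λ/λ₀)·a'(εP)/a(εP), P' = C - λ, with C(-T) = 1 and 0 < C(t) < λ/λ₀ for all t. Then for all t ≥ -T: C(t)^{λ₀}·(λ/λ₀ - C(t))^{1-λ₀} = (λ/λ₀ - 1)^{1-λ₀}·(a(εP(t))/a(εP(-T)))^{p}. -/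
theorem stmt_18 (m : ℕ) (hm : m = 2 ∨ m = 3 ∨ m = 4) (lam₀ p lam ε T : ℝ)
    (hlam₀ : lam₀ = (5 - (m : ℝ)) / ((m : ℝ) + 3))
    (hp : p = 4 / ((m : ℝ) + 3))
    (hlam : lam ∈ Set.Ioo lam₀ 1) (hε : 0 < ε) (hT : 0 < T)
    (a : ℝ → ℝ) (ha : ContDiff ℝ 1 a)
    (ha1 : ∀ x : ℝ, 1 < a x) (ha2 : ∀ x : ℝ, a x < 2) (ha' : ∀ x : ℝ, 0 < deriv a x)
    (C P : ℝ → ℝ)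
    (hC : ∀ t : ℝ, -T ≤ t →
      HasDerivAt C (ε * p * C t * (C t - lam / lam₀) * deriv a (ε * P t) / a (ε * P t)) t)
    (hP : ∀ t : ℝ, -T ≤ t → HasDerivAt P (C t - lam) t)
    (hC0 : C (-T) = 1)
    (hCb : ∀ t : ℝ, -T ≤ t → 0 < C t ∧ C t < lam / lam₀) :
    ∀ t : ℝ, -T ≤ t →
      (C t) ^ lam₀ * (lam / lam₀ - C t) ^ (1 - lam₀)
        = (lam / lam₀ - 1) ^ (1 - lam₀) * (a (ε * P t) / a (ε * P (-T))) ^ p := by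
  obtain ⟨hl1, hl2⟩ := hlam
  have hlam0pos : 0 < lam₀ := by
    rcases hm with rfl | rfl | rfl <;> norm_num [hlam₀]
  set r := lam / lam₀ with hrdef
  have hr1 : 1 < r := (one_lt_div hlam0pos).2 hl1
  have hrC : lam = r * lam₀ := by rw [hrdef]; field_simp
  clear_value r
  subst hrC
  have ha0 : ∀ x, (0:ℝ) < a x := fun x => lt_trans one_pos (ha1 x)
  have hane : ∀ x, a x ≠ 0 := fun x => (ha0 x).ne'
  set F : ℝ → ℝ := fun s => lam₀ * Real.log (C s) + (1 - lam₀) * Real.log (r - C s)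
      - p * Real.log (a (ε * P s)) with hFdef
  have hderiv : ∀ s, -T ≤ s → HasDerivAt F 0 s := by
    intro s hs
    obtain ⟨hCpos, hClt⟩ := hCb s hs
    have hCne : C s ≠ 0 := hCpos.ne'
    have hrCne : r - C s ≠ 0 := (sub_pos.2 hClt).ne'
    have hda : HasDerivAt a (deriv a (ε * P s)) (ε * P s) :=
      (ha.differentiable one_ne_zero (ε * P s)).hasDerivAt
    have haP : HasDerivAt (fun u => a (ε * P u))
        (deriv a (ε * P s) * (ε * (C s - r * lam₀))) s := by
      have h₁ : HasDerivAt (fun u => ε * P u) (ε * (C s - r * lam₀)) s := (hP s hs).const_mul ε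
      have := hda.comp s h₁
      exact this
    have h1 : HasDerivAt (fun u => Real.log (C u))
        ((ε * p * C s * (C s - r) * deriv a (ε * P s) / a (ε * P s)) / C s) s :=
      (hC s hs).log hCne
    have h2 : HasDerivAt (fun u => Real.log (r - C u))
        ((-(ε * p * C s * (C s - r) * deriv a (ε * P s) / a (ε * P s))) / (r - C s)) s := by
      have := ((hC s hs).const_sub r).log hrCne
      simpa using this
    have h3 : HasDerivAt (fun u => Real.log (a (ε * P u)))
        ((deriv a (ε * P s) * (ε * (C s - r * lam₀))) / a (ε * P s)) s := haP.log (hane _)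
    have hsum := ((h1.const_mul lam₀).add (h2.const_mul (1 - lam₀))).sub (h3.const_mul p)
    have heq : lam₀ * ((ε * p * C s * (C s - r) * deriv a (ε * P s) / a (ε * P s)) / C s)
        + (1 - lam₀) * ((-(ε * p * C s * (C s - r) * deriv a (ε * P s) / a (ε * P s))) / (r - C s))
        - p * ((deriv a (ε * P s) * (ε * (C s - r * lam₀))) / a (ε * P s)) = 0 := by
      field_simp [hCne, hrCne, hane (ε * P s)]
      ring
    rw [heq] at hsum
    exact hsum
  intro t ht
  have hFt : F t = F (-T) := by
    rcases eq_or_lt_of_le ht with h | h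
    · rw [← h]
    · have hcont : ContinuousOn F (Set.Icc (-T) t) := fun s hs =>
        ((hderiv s hs.1).continuousAt.continuousWithinAt)
      exact constant_of_has_deriv_right_zero hcont
        (fun s hs => (hderiv s hs.1).hasDerivWithinAt) t (Set.right_mem_Icc.2 ht)
  obtain ⟨hCpos, hClt⟩ := hCb t ht
  have hrCt : 0 < r - C t := sub_pos.2 hClt
  have hr1' : 0 < r - 1 := sub_pos.2 hr1
  have hdivpos : 0 < a (ε * P t) / a (ε * P (-T)) := div_pos (ha0 _) (ha0 _)
  have hkey : lam₀ * Real.log (C t) + (1 - lam₀) * Real.log (r - C t)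
      - p * Real.log (a (ε * P t))
      = (1 - lam₀) * Real.log (r - 1) - p * Real.log (a (ε * P (-T))) := by
    have := hFt
    simp only [hFdef, hC0, Real.log_one, mul_zero, zero_add] at this
    linarith
  rw [Real.rpow_def_of_pos hCpos, Real.rpow_def_of_pos hrCt, Real.rpow_def_of_pos hr1',
    Real.rpow_def_of_pos hdivpos, ← Real.exp_add, ← Real.exp_add,
    Real.log_div (hane _) (hane _)]
  congr 1
  linarith [hkey]
end

section
/- Under the hypotheses of the conserved-quantity identity for the dynamical system, the scaling C(t) satisfies C(t)^{λ₀}·(λ/λ₀ - C(t))^{1-λ₀} ≥ (λ/λ₀ - 1)^{1-λ₀}·2^{-p}, and consequently, since 0 < C(t) ≤ 1 < λ/λ₀ implies (λ/λ₀ - C(t))^{1-λ₀} ≤ (λ/λ₀)^{1-λ₀}, one gets C(t)^{λ₀} ≥ 2^{-p}·(1 - λ₀/λ)^{1-λ₀} > 0, a positive bound independent of ε and t. -/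
theorem stmt_19 (m : ℕ) (hm : m = 2 ∨ m = 3 ∨ m = 4) (lam₀ p lam ε T : ℝ)
    (hlam₀ : lam₀ = (5 - (m : ℝ)) / ((m : ℝ) + 3))
    (hp : p = 4 / ((m : ℝ) + 3))
    (hlam : lam ∈ Set.Ioo lam₀ 1) (hε : 0 < ε) (hT : 0 < T)
    (a : ℝ → ℝ)
    (ha1 : ∀ x : ℝ, 1 < a x) (ha2 : ∀ x : ℝ, a x < 2) (ha' : ∀ x : ℝ, 0 < deriv a x)
    (C P : ℝ → ℝ)
    (hC : ∀ t : ℝ, -T ≤ t →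
      HasDerivAt C (ε * p * C t * (C t - lam / lam₀) * deriv a (ε * P t) / a (ε * P t)) t)
    (hP : ∀ t : ℝ, -T ≤ t → HasDerivAt P (C t - lam) t)
    (hC0 : C (-T) = 1)
    (hCb : ∀ t : ℝ, -T ≤ t → 0 < C t ∧ C t ≤ 1)
    (hcons : ∀ t : ℝ, -T ≤ t →
      (C t) ^ lam₀ * (lam / lam₀ - C t) ^ (1 - lam₀)
        = (lam / lam₀ - 1) ^ (1 - lam₀) * (a (ε * P t) / a (ε * P (-T))) ^ p) :
    ∀ t : ℝ, -T ≤ t →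
      (C t) ^ lam₀ * (lam / lam₀ - C t) ^ (1 - lam₀)
          ≥ (lam / lam₀ - 1) ^ (1 - lam₀) * (2 : ℝ) ^ (-p) ∧
      (C t) ^ lam₀ ≥ (2 : ℝ) ^ (-p) * (1 - lam₀ / lam) ^ (1 - lam₀) ∧
      0 < (2 : ℝ) ^ (-p) * (1 - lam₀ / lam) ^ (1 - lam₀) := by
  have hlam₀pos : 0 < lam₀ := by
    rcases hm with h | h | h <;> subst h <;> norm_num [hlam₀]
  have hlam₀lt1 : lam₀ < 1 := by
    rcases hm with h | h | h <;> subst h <;> norm_num [hlam₀]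
  have hppos : 0 < p := by
    rcases hm with h | h | h <;> subst h <;> norm_num [hp]
  have hlampos : 0 < lam := lt_trans hlam₀pos hlam.1
  have hr1 : (1 : ℝ) < lam / lam₀ := (one_lt_div hlam₀pos).2 hlam.1
  have hexp : 0 ≤ 1 - lam₀ := by linarith
  intro t ht
  -- ratio bound
  have ha0 : ∀ x : ℝ, 0 < a x := fun x => lt_trans one_pos (ha1 x)
  have hratio : (1 / 2 : ℝ) ≤ a (ε * P t) / a (ε * P (-T)) := by
    rw [div_le_div_iff₀ (by norm_num) (ha0 _)]
    nlinarith [ha1 (ε * P t), ha2 (ε * P (-T))]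
  have h2p : (2 : ℝ) ^ (-p) ≤ (a (ε * P t) / a (ε * P (-T))) ^ p := by
    have : ((1 : ℝ) / 2) ^ p ≤ (a (ε * P t) / a (ε * P (-T))) ^ p :=
      Real.rpow_le_rpow (by norm_num) hratio hppos.le
    calc (2 : ℝ) ^ (-p) = ((1 : ℝ) / 2) ^ p := by
          rw [Real.rpow_neg (by norm_num), one_div, Real.inv_rpow (by norm_num)]
      _ ≤ _ := this
  have hfirst : (C t) ^ lam₀ * (lam / lam₀ - C t) ^ (1 - lam₀)
      ≥ (lam / lam₀ - 1) ^ (1 - lam₀) * (2 : ℝ) ^ (-p) := by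
    rw [hcons t ht]
    exact mul_le_mul_of_nonneg_left h2p (Real.rpow_nonneg (by linarith) _)
  refine ⟨hfirst, ?_, ?_⟩
  · -- second bound
    have hCpos := (hCb t ht).1
    have hCle := (hCb t ht).2
    have hBle : (lam / lam₀ - C t) ^ (1 - lam₀) ≤ (lam / lam₀) ^ (1 - lam₀) :=
      Real.rpow_le_rpow (by linarith) (by linarith) hexp
    have hB0pos : (0 : ℝ) < (lam / lam₀) ^ (1 - lam₀) :=
      Real.rpow_pos_of_pos (by linarith) _
    have hA : 0 ≤ (C t) ^ lam₀ := Real.rpow_nonneg hCpos.le _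
    have hAB : (C t) ^ lam₀ * (lam / lam₀) ^ (1 - lam₀)
        ≥ (lam / lam₀ - 1) ^ (1 - lam₀) * (2 : ℝ) ^ (-p) :=
      le_trans hfirst (mul_le_mul_of_nonneg_left hBle hA)
    have hKey : (2 : ℝ) ^ (-p) * (1 - lam₀ / lam) ^ (1 - lam₀) * (lam / lam₀) ^ (1 - lam₀)
        = (lam / lam₀ - 1) ^ (1 - lam₀) * (2 : ℝ) ^ (-p) := by
      have h1 : (1 - lam₀ / lam) * (lam / lam₀) = lam / lam₀ - 1 := by
        field_simp
      rw [mul_assoc, ← Real.mul_rpow (by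
          have : lam₀ / lam < 1 := (div_lt_one hlampos).2 hlam.1
          linarith) (by positivity), h1, mul_comm]
    have hfin : (2 : ℝ) ^ (-p) * (1 - lam₀ / lam) ^ (1 - lam₀) * (lam / lam₀) ^ (1 - lam₀)
        ≤ (C t) ^ lam₀ * (lam / lam₀) ^ (1 - lam₀) := by rw [hKey]; exact hAB
    exact le_of_mul_le_mul_right hfin hB0pos
  · have h1 : (0 : ℝ) < 1 - lam₀ / lam := by
      have : lam₀ / lam < 1 := (div_lt_one hlampos).2 hlam.1
      linarith
    positivity
end
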